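/- Let α, β be real numbers, neither of which is a non-positive integer, let z ≠ 0 be real, and set a_m = (α)_m (β)_m / (−z)^m, s_n = Σ_{m=0}^n a_m, N_n^{(0)} = s_n/a_{n+1} and N_n^{(1)} = s_{n+1}/a_{n+2} − s_n/a_{n+1}. Then for every integer n ≥ 0, (α+n+1)(β+n+1) N_n^{(1)} + [ z + (α+n+1)(β+n+1) ] N_n^{(0)} + z = 0; equivalently, N_n^{(1)} = s_n D_n^{(1)} + a_{n+1}/a_{n+2}, where D_n^{(1)} = 1/a_{n+2} − 1/a_{n+1}. -/

import Mathlib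

/-- The Pochhammer symbol (rising factorial) `(x)_n = x(x+1)⋯(x+n−1)`, with `(x)_0 = 1`. -/
noncomputable def poch (x : ℝ) : ℕ → ℝ
  | 0 => 1
  | n + 1 => poch x n * (x + n)

lemma poch_ne_zero {x : ℝ} (hx : ∀ m : ℕ, x ≠ -(m : ℝ)) : ∀ n, poch x n ≠ 0
  | 0 => one_ne_zero
  | n + 1 => mul_ne_zero (poch_ne_zero hx n) fun h => hx n (eq_neg_of_add_eq_zero_left h)

lemma poch_mul_poch_div_pow_ne_zero {α β z : ℝ} (hα : ∀ m : ℕ, α ≠ -(m : ℝ))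
    (hβ : ∀ m : ℕ, β ≠ -(m : ℝ)) (hz : z ≠ 0) (m : ℕ) :
    poch α m * poch β m / (-z) ^ m ≠ 0 :=
  div_ne_zero (mul_ne_zero (poch_ne_zero hα m) (poch_ne_zero hβ m)) (pow_ne_zero m (neg_ne_zero.mpr hz))

lemma poch_mul_poch_div_pow_succ_mul (α β : ℝ) {z : ℝ} (hz : z ≠ 0) (m : ℕ) :
    poch α (m + 1) * poch β (m + 1) / (-z) ^ (m + 1) * (-z) =
      poch α m * poch β m / (-z) ^ m * ((α + m) * (β + m)) := by
  have hz' : -z ≠ 0 := neg_ne_zero.mpr hz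
  simp only [poch]
  field_simp
  ring

section PartialSums

variable {K : Type*} [Field K] {a s : ℕ → K} {n : ℕ}

lemma div_succ_sub_div_eq (hs : s (n + 1) = s n + a (n + 1)) :
    s (n + 1) / a (n + 2) - s n / a (n + 1) =
      s n * (1 / a (n + 2) - 1 / a (n + 1)) + a (n + 1) / a (n + 2) := by
  rw [hs]
  ring

/-- Once `s (n+1) = s n + a (n+1)` is substituted, the ratio condition `a (n+1) / a (n+2) = -z / P`
cancels every occurrence of `s n`. -/
lemma numerator_relation_of_ratio {z P : K} (hs : s (n + 1) = s n + a (n + 1))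
    (h₁ : a (n + 1) ≠ 0) (h₂ : a (n + 2) ≠ 0) (hratio : a (n + 2) * (-z) = a (n + 1) * P) :
    P * (s (n + 1) / a (n + 2) - s n / a (n + 1)) + (z + P) * (s n / a (n + 1)) + z = 0 := by
  rw [hs]
  field_simp
  linear_combination (-(s n + a (n + 1))) * hratio

end PartialSums

/-- With `a_m = (α)_m (β)_m / (−z)^m`, `s_n = Σ_{m=0}^n a_m`,
`N_n^{(0)} = s_n/a_{n+1}` and `N_n^{(1)} = s_{n+1}/a_{n+2} − s_n/a_{n+1}`, for every `n ≥ 0`,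
`(α+n+1)(β+n+1) N_n^{(1)} + [z + (α+n+1)(β+n+1)] N_n^{(0)} + z = 0`; equivalently,
`N_n^{(1)} = s_n D_n^{(1)} + a_{n+1}/a_{n+2}`, where `D_n^{(1)} = 1/a_{n+2} − 1/a_{n+1}`. -/
theorem drummond_numerator_initial
    (α β z : ℝ) (hα : ∀ m : ℕ, α ≠ -(m : ℝ)) (hβ : ∀ m : ℕ, β ≠ -(m : ℝ)) (hz : z ≠ 0)
    (a : ℕ → ℝ) (ha : ∀ m : ℕ, a m = poch α m * poch β m / (-z) ^ m)
    (s : ℕ → ℝ) (hs : ∀ n : ℕ, s n = ∑ m ∈ Finset.range (n + 1), a m)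
    (N0 N1 : ℕ → ℝ)
    (hN0 : ∀ n : ℕ, N0 n = s n / a (n + 1))
    (hN1 : ∀ n : ℕ, N1 n = s (n + 1) / a (n + 2) - s n / a (n + 1)) :
    ∀ n : ℕ,
      (α + n + 1) * (β + n + 1) * N1 n + (z + (α + n + 1) * (β + n + 1)) * N0 n + z = 0 ∧
      N1 n = s n * (1 / a (n + 2) - 1 / a (n + 1)) + a (n + 1) / a (n + 2) := by
  intro n
  have hsucc : s (n + 1) = s n + a (n + 1) := by rw [hs, hs, Finset.sum_range_succ]
  have hne : ∀ m, a m ≠ 0 := fun m => ha m ▸ poch_mul_poch_div_pow_ne_zero hα hβ hz m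
  have hratio : a (n + 2) * (-z) = a (n + 1) * ((α + n + 1) * (β + n + 1)) := by
    simp only [ha]
    exact (poch_mul_poch_div_pow_succ_mul α β hz (n + 1)).trans (by push_cast; ring)
  rw [hN0, hN1]
  exact ⟨numerator_relation_of_ratio hsucc (hne _) (hne _) hratio, div_succ_sub_div_eq hsucc⟩
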